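/- Let E/F be a quadratic field extension and let r ≥ 1 and c ≥ 1 be integers. Then K₀(𝔭^c)·ι_r(𝒪_r^×) = ⨆_{u ∈ 𝔬/𝔭^c} K₀(𝔭^c)·n₋(u) = { [[c₁,c₂],[c₃,c₄]] ∈ GL₂(𝔬) : c₄ ∈ 𝔬^× }; in particular this set is independent of c ≥ 1. -/

import Mathlib

/-! For `g ∈ GL₂(𝔬)` with `g₂₂ ∈ 𝔬^×` one has `g = (g n₋(-u)) n₋(u)` with `u = g₂₁ / g₂₂` and
`g n₋(-u) ∈ K₀(𝔭^c)`; conversely `k₂₂ ∈ 𝔬^×` for every `k ∈ K₀(𝔭^c)`, `c ≥ 1`, because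
`k₂₁ ∈ 𝔭`. As `n₋(u₁) n₋(u₂)⁻¹ = n₋(u₁ - u₂)`, the cosets `K₀(𝔭^c) n₋(u)` depend only on
`u mod 𝔭^c` and are disjoint otherwise.

In the basis `(β, 1)`, `ι_r(s + ϖ^r y β) = [[s + ϖ^r y b, ϖ^{2r} y], [-a y, s]]`, and since the
norm of `s + ϖ^r y β` is `s² mod 𝔭`, it is a unit of `𝒪_r` exactly when `s ∈ 𝔬^×`. Hence
`k ι_r(t)` has a unit lower-right entry, and conversely `t = a - ϖ^r u β` puts `ι_r(t)` into
`K₀(𝔭^c) n₋(u)`. -/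

/-- `a(y) = diag(y, 1)`. -/
def aM {F : Type*} [Field F] (y : F) : Matrix (Fin 2) (Fin 2) F := !![y, 0; 0, 1]

/-- `n₋(x) = [[1,0],[x,1]]`. -/
def nmM {F : Type*} [Field F] (x : F) : Matrix (Fin 2) (Fin 2) F := !![1, 0; x, 1]

/-- `GL₂(𝔬)`. -/
def GLo {F : Type*} [Field F] (o : ValuationSubring F) :
    Set (Matrix (Fin 2) (Fin 2) F) :=
  {g | (∀ i j, g i j ∈ o) ∧
    ∃ h : Matrix (Fin 2) (Fin 2) F, (∀ i j, h i j ∈ o) ∧ g * h = 1 ∧ h * g = 1}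

/-- `K₀(𝔭^c)`: elements of `GL₂(𝔬)` whose lower-left entry lies in `𝔭^c`. -/
def K0 {F : Type*} [Field F] (o : ValuationSubring F) (ϖ : F) (c : ℕ) :
    Set (Matrix (Fin 2) (Fin 2) F) :=
  {g | g ∈ GLo o ∧ ∃ d ∈ o, g 1 0 = ϖ ^ c * d}

/-- The order `𝒪_r = 𝔬 + ϖ^rβ𝔬 ⊆ E`. -/
def OrE {F E : Type*} [Field F] [Field E] [Algebra F E] (o : ValuationSubring F)
    (ϖ : F) (β : E) (r : ℕ) : Set E :=
  {z | ∃ x y : F, x ∈ o ∧ y ∈ o ∧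
    z = algebraMap F E x + algebraMap F E (ϖ ^ r * y) * β}

/-- The unit group `𝒪_r^×` (as a subset of `E`). -/
def OrEx {F E : Type*} [Field F] [Field E] [Algebra F E] (o : ValuationSubring F)
    (ϖ : F) (β : E) (r : ℕ) : Set E :=
  {z | z ∈ OrE o ϖ β r ∧ ∃ w ∈ OrE o ϖ β r, z * w = 1}

section Valuation

variable {F : Type*} [Field F] {o : ValuationSubring F}

theorem inv_mem_and_ne_zero_iff {x : F} (hx : x ∈ o) :
    x⁻¹ ∈ o ∧ x ≠ 0 ↔ o.valuation x = 1 := by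
  constructor
  · rintro ⟨hinv, hne⟩
    refine le_antisymm ((o.valuation_le_one_iff x).2 hx) ?_
    rwa [Valuation.one_le_val_iff _ hne, o.valuation_le_one_iff]
  · intro h
    refine ⟨?_, fun h0 => by simp [h0] at h⟩
    rw [← o.valuation_le_one_iff, map_inv₀, h, inv_one]

theorem mem_of_valuation_eq_one {x : F} (h : o.valuation x = 1) : x ∈ o :=
  o.mem_of_valuation_le_one x h.le

theorem valuation_add_eq_one {x y : F} (hx : o.valuation x = 1) (hy : o.valuation y < 1) :
    o.valuation (x + y) = 1 := by
  rw [Valuation.map_add_eq_of_lt_left _ (hx ▸ hy), hx]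

theorem valuation_eq_one_of_mul {x y : F} (hx : x ∈ o) (hy : y ∈ o)
    (h : o.valuation (x * y) = 1) : o.valuation x = 1 := by
  have hxy : IsUnit (⟨x, hx⟩ * ⟨y, hy⟩ : o) := (o.valuation_eq_one_iff _).2 h
  exact (o.valuation_eq_one_iff ⟨x, hx⟩).1 (isUnit_of_mul_isUnit_left hxy)

theorem valuation_mul_lt_one {x y : F} (hx : o.valuation x < 1) (hy : y ∈ o) :
    o.valuation (x * y) < 1 := by
  rw [map_mul]
  exact (mul_le_of_le_one_right' ((o.valuation_le_one_iff y).2 hy)).trans_lt hx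

theorem valuation_pow_lt_one {ϖ : F} (hϖ : o.valuation ϖ < 1) {n : ℕ} (hn : n ≠ 0) :
    o.valuation (ϖ ^ n) < 1 := by
  rw [map_pow]
  exact pow_lt_one' hϖ hn

end Valuation

section GLo

variable {F : Type*} [Field F] {o : ValuationSubring F}

theorem det_mem {g : Matrix (Fin 2) (Fin 2) F} (hg : ∀ i j, g i j ∈ o) : g.det ∈ o := by
  rw [Matrix.det_fin_two]
  exact sub_mem (mul_mem (hg _ _) (hg _ _)) (mul_mem (hg _ _) (hg _ _))

theorem smul_adjugate_mem {g : Matrix (Fin 2) (Fin 2) F} (hg : ∀ i j, g i j ∈ o) {x : F}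
    (hx : x ∈ o) : ∀ i j, (x • g.adjugate) i j ∈ o := by
  intro i j
  rw [Matrix.adjugate_fin_two]
  fin_cases i <;> fin_cases j <;> simpa using mul_mem hx (by simpa using hg _ _)

theorem inv_det_smul_adjugate_mul {n : Type*} [Fintype n] [DecidableEq n]
    {g : Matrix n n F} (h : g.det ≠ 0) :
    (g.det⁻¹ • g.adjugate) * g = 1 ∧ g * (g.det⁻¹ • g.adjugate) = 1 := by
  rw [Matrix.smul_mul, Matrix.adjugate_mul, Matrix.mul_smul, Matrix.mul_adjugate, smul_smul,
    inv_mul_cancel₀ h, one_smul]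
  exact ⟨rfl, rfl⟩

theorem mem_GLo_iff {g : Matrix (Fin 2) (Fin 2) F} :
    g ∈ GLo o ↔ (∀ i j, g i j ∈ o) ∧ o.valuation g.det = 1 := by
  constructor
  · rintro ⟨hg, h, hh, hgh, -⟩
    refine ⟨hg, valuation_eq_one_of_mul (det_mem hg) (det_mem hh) ?_⟩
    rw [← Matrix.det_mul, hgh, Matrix.det_one, map_one]
  · rintro ⟨hg, hdet⟩
    obtain ⟨hinv, hne⟩ := (inv_mem_and_ne_zero_iff (det_mem hg)).2 hdet
    obtain ⟨hleft, hright⟩ := inv_det_smul_adjugate_mul hne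
    exact ⟨hg, _, smul_adjugate_mem hg hinv, hright, hleft⟩

theorem GLo_mul {g h : Matrix (Fin 2) (Fin 2) F} (hg : g ∈ GLo o) (hh : h ∈ GLo o) :
    g * h ∈ GLo o := by
  rw [mem_GLo_iff, Matrix.det_mul, map_mul] at *
  refine ⟨fun i j => ?_, by rw [hg.2, hh.2, one_mul]⟩
  rw [Matrix.mul_apply, Fin.sum_univ_two]
  exact add_mem (mul_mem (hg.1 _ _) (hh.1 _ _)) (mul_mem (hg.1 _ _) (hh.1 _ _))

end GLo

section K0

variable {F : Type*} [Field F] {o : ValuationSubring F} {ϖ : F} {c : ℕ}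

theorem K0_mul {g h : Matrix (Fin 2) (Fin 2) F} (hg : g ∈ K0 o ϖ c) (hh : h ∈ K0 o ϖ c) :
    g * h ∈ K0 o ϖ c := by
  obtain ⟨hgG, dg, hdg, hg10⟩ := hg
  obtain ⟨hhG, dh, hdh, hh10⟩ := hh
  refine ⟨GLo_mul hgG hhG, dg * h 0 0 + g 1 1 * dh,
    add_mem (mul_mem hdg (hhG.1 _ _)) (mul_mem (hgG.1 _ _) hdh), ?_⟩
  rw [Matrix.mul_apply, Fin.sum_univ_two, hg10, hh10]
  ring

theorem exists_inv_mem_K0 {k : Matrix (Fin 2) (Fin 2) F} (hk : k ∈ K0 o ϖ c) :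
    ∃ k' ∈ K0 o ϖ c, k' * k = 1 ∧ k * k' = 1 := by
  obtain ⟨hkG, d, hd, hk10⟩ := hk
  obtain ⟨hent, hdet⟩ := mem_GLo_iff.1 hkG
  obtain ⟨hinv, hne⟩ := (inv_mem_and_ne_zero_iff (det_mem hent)).2 hdet
  obtain ⟨hleft, hright⟩ := inv_det_smul_adjugate_mul hne
  refine ⟨_, ⟨⟨smul_adjugate_mem hent hinv, k, hent, hleft, hright⟩,
    -(k.det⁻¹ * d), neg_mem (mul_mem hinv hd), ?_⟩, hleft, hright⟩
  simp only [Matrix.adjugate_fin_two, Fin.isValue, hk10, Matrix.smul_apply, Matrix.of_apply,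
    Matrix.cons_val', Matrix.cons_val_zero, Matrix.cons_val_fin_one, Matrix.cons_val_one,
    smul_eq_mul, mul_neg, neg_inj]
  ring

theorem valuation_K0_one_one (hϖ : o.valuation ϖ < 1) (hc : c ≠ 0)
    {k : Matrix (Fin 2) (Fin 2) F} (hk : k ∈ K0 o ϖ c) : o.valuation (k 1 1) = 1 := by
  obtain ⟨hkG, d, hd, hk10⟩ := hk
  obtain ⟨hent, hdet⟩ := mem_GLo_iff.1 hkG
  have hdiag : k 1 1 * k 0 0 = k.det + ϖ ^ c * (d * k 0 1) := by
    rw [Matrix.det_fin_two, hk10]; ring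
  refine valuation_eq_one_of_mul (hent 1 1) (hent 0 0) ?_
  rw [hdiag]
  exact valuation_add_eq_one hdet
    (valuation_mul_lt_one (valuation_pow_lt_one hϖ hc) (mul_mem hd (hent 0 1)))

end K0

section LowerUnipotent

variable {F : Type*} [Field F] {o : ValuationSubring F}

theorem nmM_add (u v : F) : nmM (u + v) = nmM u * nmM v := by
  simp [nmM]

theorem nmM_zero : nmM (0 : F) = 1 := by
  rw [nmM, Matrix.one_fin_two]

theorem mul_nmM_one_zero (g : Matrix (Fin 2) (Fin 2) F) (u : F) :
    (g * nmM u) 1 0 = g 1 0 + g 1 1 * u := by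
  simp [nmM, Matrix.mul_apply, Fin.sum_univ_two]

theorem mul_nmM_one_one (g : Matrix (Fin 2) (Fin 2) F) (u : F) :
    (g * nmM u) 1 1 = g 1 1 := by
  simp [nmM, Matrix.mul_apply, Fin.sum_univ_two]

theorem mul_nmM_neg_mul_nmM (g : Matrix (Fin 2) (Fin 2) F) (u : F) :
    g * nmM (-u) * nmM u = g := by
  rw [mul_assoc, ← nmM_add, neg_add_cancel, nmM_zero, mul_one]

theorem nmM_mem_GLo {u : F} (hu : u ∈ o) : nmM u ∈ GLo o := by
  refine mem_GLo_iff.2 ⟨fun i j => ?_, by simp [nmM, Matrix.det_fin_two]⟩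
  fin_cases i <;> fin_cases j <;> simp [nmM, hu]

theorem nmM_mem_K0_iff {ϖ u : F} (hϖo : ϖ ∈ o) {c : ℕ} :
    nmM u ∈ K0 o ϖ c ↔ ∃ d ∈ o, u = ϖ ^ c * d := by
  refine ⟨fun h => by simpa [nmM] using h.2, ?_⟩
  rintro ⟨d, hd, rfl⟩
  exact ⟨nmM_mem_GLo (mul_mem (pow_mem hϖo c) hd), d, hd, by simp [nmM]⟩

end LowerUnipotent

section Cosets

variable {F : Type*} [Field F] {o : ValuationSubring F} {ϖ : F} {c : ℕ}

theorem exists_K0_mul_nmM_iff (hϖ : o.valuation ϖ < 1) (hc : c ≠ 0)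
    {g : Matrix (Fin 2) (Fin 2) F} :
    (∃ u ∈ o, ∃ k ∈ K0 o ϖ c, g = k * nmM u) ↔ g ∈ GLo o ∧ (g 1 1)⁻¹ ∈ o ∧ g 1 1 ≠ 0 := by
  constructor
  · rintro ⟨u, hu, k, hk, rfl⟩
    rw [mul_nmM_one_one, inv_mem_and_ne_zero_iff (hk.1.1 1 1)]
    exact ⟨GLo_mul hk.1 (nmM_mem_GLo hu), valuation_K0_one_one hϖ hc hk⟩
  · rintro ⟨hg, hinv, hne⟩
    have hu : g 1 0 * (g 1 1)⁻¹ ∈ o := mul_mem (hg.1 1 0) hinv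
    refine ⟨_, hu, g * nmM (-(g 1 0 * (g 1 1)⁻¹)), ⟨GLo_mul hg (nmM_mem_GLo (neg_mem hu)), 0,
      zero_mem o, ?_⟩, (mul_nmM_neg_mul_nmM g _).symm⟩
    rw [mul_nmM_one_zero]
    field_simp
    ring

theorem K0_mul_nmM_subset (hϖo : ϖ ∈ o) {u₁ u₂ : F} (h : ∃ d ∈ o, u₁ - u₂ = ϖ ^ c * d) :
    {g | ∃ k ∈ K0 o ϖ c, g = k * nmM u₁} ⊆ {g | ∃ k ∈ K0 o ϖ c, g = k * nmM u₂} := by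
  rintro _ ⟨k, hk, rfl⟩
  exact ⟨k * nmM (u₁ - u₂), K0_mul hk ((nmM_mem_K0_iff hϖo).2 h),
    by rw [mul_assoc, ← nmM_add, sub_add_cancel]⟩

theorem K0_mul_nmM_eq (hϖo : ϖ ∈ o) {u₁ u₂ : F} (h : ∃ d ∈ o, u₁ - u₂ = ϖ ^ c * d) :
    {g | ∃ k ∈ K0 o ϖ c, g = k * nmM u₁} = {g | ∃ k ∈ K0 o ϖ c, g = k * nmM u₂} := by
  obtain ⟨d, hd, hdiff⟩ := h
  refine (K0_mul_nmM_subset hϖo ⟨d, hd, hdiff⟩).antisymm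
    (K0_mul_nmM_subset hϖo ⟨-d, neg_mem hd, ?_⟩)
  linear_combination -hdiff

theorem disjoint_K0_mul_nmM (hϖo : ϖ ∈ o) {u₁ u₂ : F} (h : ¬ ∃ d ∈ o, u₁ - u₂ = ϖ ^ c * d) :
    Disjoint {g | ∃ k ∈ K0 o ϖ c, g = k * nmM u₁} {g | ∃ k ∈ K0 o ϖ c, g = k * nmM u₂} := by
  rw [Set.disjoint_left]
  rintro _ ⟨k₁, hk₁, rfl⟩ ⟨k₂, hk₂, hk⟩
  obtain ⟨k₂', hk₂', hinv, -⟩ := exists_inv_mem_K0 hk₂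
  have hquot : k₂' * k₁ = nmM (u₂ - u₁) :=
    calc k₂' * k₁ = k₂' * (k₁ * nmM u₁) * nmM (-u₁) := by
          rw [mul_assoc, mul_assoc, ← nmM_add, add_neg_cancel, nmM_zero, mul_one]
      _ = nmM (u₂ - u₁) := by rw [hk, ← mul_assoc, hinv, one_mul, ← nmM_add, sub_eq_add_neg]
  obtain ⟨d, hd, hdiff⟩ := (nmM_mem_K0_iff hϖo).1 (hquot ▸ K0_mul hk₂' hk₁)
  exact h ⟨-d, neg_mem hd, by linear_combination -hdiff⟩

end Cosets

section Quadratic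

variable {F E : Type*} [Field F] [Field E] [Algebra F E] {β : E} {a b : F}

theorem algebraMap_add_mul_inj (hβ : β ∉ Set.range (algebraMap F E)) {s t s' t' : F}
    (h : algebraMap F E s + algebraMap F E t * β = algebraMap F E s' + algebraMap F E t' * β) :
    s = s' ∧ t = t' := by
  obtain rfl : t = t' := by
    by_contra hne
    have hne' : algebraMap F E (t' - t) ≠ 0 :=
      (map_ne_zero _).2 (sub_ne_zero.2 (Ne.symm hne))
    refine hβ ⟨(s - s') / (t' - t), ?_⟩
    rw [map_div₀, div_eq_iff hne', map_sub, map_sub]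
    linear_combination h
  exact ⟨(algebraMap F E).injective (add_right_cancel h), rfl⟩

theorem apply_add_mul_of_mul_basis (hβ : β ∉ Set.range (algebraMap F E))
    (hmin : β ^ 2 - algebraMap F E b * β + algebraMap F E a = 0)
    {ι : E → Matrix (Fin 2) (Fin 2) F}
    (hι : ∀ x : E, ∀ j : Fin 2,
      x * (![β, 1] j) = ∑ i : Fin 2, (![β, 1] i) * algebraMap F E (ι x i j)) (s t : F) :
    ι (algebraMap F E s + algebraMap F E t * β) = !![s + t * b, t; -(t * a), s] := by
  set z := algebraMap F E s + algebraMap F E t * β with hz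
  have h0 := hι z 0
  have h1 := hι z 1
  simp only [Matrix.cons_val_one, Matrix.cons_val_zero, Fin.sum_univ_two, mul_one,
    one_mul] at h0 h1
  have e1 : algebraMap F E s + algebraMap F E t * β =
      algebraMap F E (ι z 1 1) + algebraMap F E (ι z 0 1) * β := by
    linear_combination h1 - hz
  have e0 : algebraMap F E (-(t * a)) + algebraMap F E (s + t * b) * β =
      algebraMap F E (ι z 1 0) + algebraMap F E (ι z 0 0) * β := by
    simp only [map_neg, map_mul, map_add]
    linear_combination h0 - β * hz - algebraMap F E t * hmin
  obtain ⟨h11, h01⟩ := algebraMap_add_mul_inj hβ e1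
  obtain ⟨h10, h00⟩ := algebraMap_add_mul_inj hβ e0
  rw [Matrix.eta_fin_two (ι z), ← h00, ← h01, ← h10, ← h11]

theorem aM_mul_mul_aM_inv {y : F} (hy : y ≠ 0) (p q r s : F) :
    aM y * !![p, q; r, s] * aM y⁻¹ = !![p, y * q; y⁻¹ * r, s] := by
  simp [aM, hy, mul_comm y, mul_comm r]

end Quadratic

section Order

variable {F E : Type*} [Field F] [Field E] [Algebra F E] {o : ValuationSubring F} {β : E}
  {a b : F}

theorem aM_mul_mul_aM_inv_add_mul (hβ : β ∉ Set.range (algebraMap F E))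
    (hmin : β ^ 2 - algebraMap F E b * β + algebraMap F E a = 0)
    {ι : E → Matrix (Fin 2) (Fin 2) F}
    (hι : ∀ x : E, ∀ j : Fin 2,
      x * (![β, 1] j) = ∑ i : Fin 2, (![β, 1] i) * algebraMap F E (ι x i j))
    {π : F} (hπ : π ≠ 0) (s y : F) :
    aM π * ι (algebraMap F E s + algebraMap F E (π * y) * β) * aM π⁻¹ =
      !![s + π * y * b, π * (π * y); -(y * a), s] := by
  rw [apply_add_mul_of_mul_basis hβ hmin hι, aM_mul_mul_aM_inv hπ,
    show π⁻¹ * -(π * y * a) = -(y * a) by field_simp]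

theorem valuation_norm_eq_one (ha : a ∈ o) (hb : b ∈ o) {π s y : F}
    (hπ : o.valuation π < 1) (hs : o.valuation s = 1) (hy : y ∈ o) :
    o.valuation (s * (s + π * y * b) + π * (π * y) * (y * a)) = 1 := by
  have hs' := mem_of_valuation_eq_one hs
  have hπ' : π ∈ o := o.mem_of_valuation_le_one π hπ.le
  rw [show s * (s + π * y * b) + π * (π * y) * (y * a) =
    s * s + π * (s * y * b + π * y * (y * a)) by ring]
  refine valuation_add_eq_one (by rw [map_mul, hs, one_mul]) (valuation_mul_lt_one hπ ?_)
  exact add_mem (mul_mem (mul_mem hs' hy) hb) (mul_mem (mul_mem hπ' hy) (mul_mem hy ha))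

theorem embedMatrix_mem_GLo (ha : a ∈ o) (hb : b ∈ o) {π s y : F}
    (hπ : o.valuation π < 1) (hs : o.valuation s = 1) (hy : y ∈ o) :
    !![s + π * y * b, π * (π * y); -(y * a), s] ∈ GLo o := by
  have hs' := mem_of_valuation_eq_one hs
  have hπ' : π ∈ o := o.mem_of_valuation_le_one π hπ.le
  refine mem_GLo_iff.2 ⟨fun i j => ?_, ?_⟩
  · fin_cases i <;> fin_cases j <;> simp only [Fin.zero_eta, Fin.mk_one, Matrix.of_apply,
      Matrix.cons_val', Matrix.cons_val_zero, Matrix.cons_val_one, Matrix.empty_val',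
      Matrix.cons_val_fin_one]
    · exact add_mem hs' (mul_mem (mul_mem hπ' hy) hb)
    · exact mul_mem hπ' (mul_mem hπ' hy)
    · exact neg_mem (mul_mem hy ha)
    · exact hs'
  · rw [Matrix.det_fin_two_of, ← valuation_norm_eq_one ha hb hπ hs hy]
    ring_nf

theorem mem_OrEx_iff (hβ : β ∉ Set.range (algebraMap F E))
    (hmin : β ^ 2 - algebraMap F E b * β + algebraMap F E a = 0) (ha : a ∈ o) (hb : b ∈ o)
    {ϖ : F} (hϖ : o.valuation ϖ < 1) {r : ℕ} (hr : r ≠ 0) {t : E} :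
    t ∈ OrEx o ϖ β r ↔ ∃ s y : F, o.valuation s = 1 ∧ y ∈ o ∧
      t = algebraMap F E s + algebraMap F E (ϖ ^ r * y) * β := by
  have hπ := valuation_pow_lt_one hϖ hr
  have hπ' : ϖ ^ r ∈ o := o.mem_of_valuation_le_one _ hπ.le
  constructor
  · rintro ⟨⟨s, y, hs, hy, rfl⟩, w, ⟨s', y', hs', hy', rfl⟩, hw⟩
    have hcoord : algebraMap F E (s * s' - ϖ ^ r * ϖ ^ r * y * y' * a) +
        algebraMap F E (ϖ ^ r * (s * y' + s' * y) + ϖ ^ r * ϖ ^ r * y * y' * b) * β =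
        algebraMap F E 1 + algebraMap F E 0 * β := by
      simp only [map_mul, map_sub, map_add, map_one, map_zero] at hw ⊢
      linear_combination hw - (algebraMap F E (ϖ ^ r)) ^ 2 * algebraMap F E y *
        algebraMap F E y' * hmin
    have hss' : s * s' = 1 + ϖ ^ r * (ϖ ^ r * y * y' * a) := by
      linear_combination (algebraMap_add_mul_inj hβ hcoord).1
    refine ⟨s, y, valuation_eq_one_of_mul hs hs' ?_, hy, rfl⟩
    rw [hss']
    exact valuation_add_eq_one (map_one _) (valuation_mul_lt_one hπ
      (mul_mem (mul_mem (mul_mem hπ' hy) hy') ha))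
  · rintro ⟨s, y, hs, hy, rfl⟩
    obtain ⟨N, hNdef⟩ : ∃ N, N = s * (s + ϖ ^ r * y * b) + ϖ ^ r * (ϖ ^ r * y) * (y * a) :=
      ⟨_, rfl⟩
    have hN := valuation_norm_eq_one ha hb hπ hs hy
    rw [← hNdef] at hN
    obtain ⟨hNinv, hNne⟩ := (inv_mem_and_ne_zero_iff (mem_of_valuation_eq_one hN)).2 hN
    have hs' := mem_of_valuation_eq_one hs
    refine ⟨⟨s, y, hs', hy, rfl⟩, algebraMap F E (N⁻¹ * (s + ϖ ^ r * y * b)) +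
      algebraMap F E (ϖ ^ r * -(N⁻¹ * y)) * β, ⟨_, _,
      mul_mem hNinv (add_mem hs' (mul_mem (mul_mem hπ' hy) hb)),
      neg_mem (mul_mem hNinv hy), rfl⟩, ?_⟩
    have hNN := congrArg (algebraMap F E) (inv_mul_cancel₀ hNne)
    have hNdef' := congrArg (algebraMap F E) hNdef
    simp only [map_mul, map_add, map_neg, map_one] at hNN hNdef' ⊢
    linear_combination hNN - algebraMap F E N⁻¹ * hNdef' -
      algebraMap F E N⁻¹ * (algebraMap F E (ϖ ^ r) * algebraMap F E y) ^ 2 * hmin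

end Order

section DoubleCoset

variable {F E : Type*} [Field F] [Field E] [Algebra F E] {o : ValuationSubring F} {β : E}
  {a b ϖ : F} {r c : ℕ} {ι : E → Matrix (Fin 2) (Fin 2) F}

theorem mul_conj_mem_of_mem_OrEx (hβ : β ∉ Set.range (algebraMap F E))
    (hmin : β ^ 2 - algebraMap F E b * β + algebraMap F E a = 0) (ha : a ∈ o) (hb : b ∈ o)
    (hι : ∀ x : E, ∀ j : Fin 2,
      x * (![β, 1] j) = ∑ i : Fin 2, (![β, 1] i) * algebraMap F E (ι x i j))
    (hϖ : o.valuation ϖ < 1) (hϖ0 : ϖ ≠ 0) (hr : r ≠ 0) {g : Matrix (Fin 2) (Fin 2) F}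
    (hg : g ∈ GLo o) (hg11 : o.valuation (g 1 1) = 1) {t : E} (ht : t ∈ OrEx o ϖ β r) :
    g * (aM (ϖ ^ r) * ι t * aM ((ϖ ^ r)⁻¹)) ∈
      {h : Matrix (Fin 2) (Fin 2) F | h ∈ GLo o ∧ (h 1 1)⁻¹ ∈ o ∧ h 1 1 ≠ 0} := by
  obtain ⟨s, y, hs, hy, rfl⟩ := (mem_OrEx_iff hβ hmin ha hb hϖ hr).1 ht
  have hπ := valuation_pow_lt_one hϖ hr
  rw [aM_mul_mul_aM_inv_add_mul hβ hmin hι (pow_ne_zero r hϖ0)]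
  have hgh := GLo_mul hg (embedMatrix_mem_GLo ha hb hπ hs hy)
  refine ⟨hgh, (inv_mem_and_ne_zero_iff (hgh.1 1 1)).2 ?_⟩
  have h11 : (g * !![s + ϖ ^ r * y * b, ϖ ^ r * (ϖ ^ r * y); -(y * a), s]) 1 1 =
      g 1 1 * s + ϖ ^ r * (ϖ ^ r * y * g 1 0) := by
    simp only [Fin.isValue, Matrix.mul_apply, Matrix.of_apply, Matrix.cons_val',
      Matrix.cons_val_one, Matrix.cons_val_fin_one, Fin.sum_univ_two, Matrix.cons_val_zero]
    ring
  rw [h11]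
  refine valuation_add_eq_one (by rw [map_mul, hg11, hs, one_mul]) (valuation_mul_lt_one hπ ?_)
  exact mul_mem (mul_mem (o.mem_of_valuation_le_one _ hπ.le) hy) (hg.1 1 0)

theorem exists_K0_mul_conj_eq (hβ : β ∉ Set.range (algebraMap F E))
    (hmin : β ^ 2 - algebraMap F E b * β + algebraMap F E a = 0) (ha : o.valuation a = 1)
    (hb : b ∈ o)
    (hι : ∀ x : E, ∀ j : Fin 2,
      x * (![β, 1] j) = ∑ i : Fin 2, (![β, 1] i) * algebraMap F E (ι x i j))
    (hϖ : o.valuation ϖ < 1) (hϖ0 : ϖ ≠ 0) (hr : r ≠ 0) {u : F} (hu : u ∈ o)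
    {k : Matrix (Fin 2) (Fin 2) F} (hk : k ∈ K0 o ϖ c) :
    ∃ k' ∈ K0 o ϖ c, ∃ t ∈ OrEx o ϖ β r, k * nmM u = k' * (aM (ϖ ^ r) * ι t * aM ((ϖ ^ r)⁻¹)) := by
  have ha' := mem_of_valuation_eq_one ha
  -- `ι_r(t)` has bottom row `a · (u, 1)`, hence lies in `K₀(𝔭^c) n₋(u)`.
  set t := algebraMap F E a + algebraMap F E (ϖ ^ r * -u) * β
  have ht : t ∈ OrEx o ϖ β r := (mem_OrEx_iff hβ hmin ha' hb hϖ hr).2 ⟨a, -u, ha, neg_mem hu, rfl⟩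
  set M := aM (ϖ ^ r) * ι t * aM ((ϖ ^ r)⁻¹)
  have hM : M = !![a + ϖ ^ r * -u * b, ϖ ^ r * (ϖ ^ r * -u); -(-u * a), a] :=
    aM_mul_mul_aM_inv_add_mul hβ hmin hι (pow_ne_zero r hϖ0) a (-u)
  have hMG : M ∈ GLo o :=
    hM ▸ embedMatrix_mem_GLo ha' hb (valuation_pow_lt_one hϖ hr) ha (neg_mem hu)
  have hMK : M * nmM (-u) ∈ K0 o ϖ c := by
    refine ⟨GLo_mul hMG (nmM_mem_GLo (neg_mem hu)), 0, zero_mem o, ?_⟩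
    rw [mul_nmM_one_zero, hM]
    simp only [mul_neg, neg_mul, neg_neg, Fin.isValue, Matrix.of_apply, Matrix.cons_val',
      Matrix.cons_val_zero, Matrix.cons_val_fin_one, Matrix.cons_val_one, mul_zero]
    ring
  obtain ⟨m, hm, hmM, -⟩ := exists_inv_mem_K0 hMK
  refine ⟨k * m, K0_mul hk hm, t, ht, ?_⟩
  calc k * nmM u = k * (m * (M * nmM (-u))) * nmM u := by rw [hmM, mul_one]
    _ = k * m * M := by simp only [mul_assoc, ← nmM_add, neg_add_cancel, nmM_zero, mul_one]

end DoubleCoset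

theorem stmt_14_general {F E : Type*} [Field F] [Field E] [Algebra F E]
    (o : ValuationSubring F)
    (O : ValuationSubring E)
    (hcomp : ∀ x : F, x ∈ o ↔ algebraMap F E x ∈ O)
    (ϖ : F) (hϖo : ϖ ∈ o) (hϖ : Irreducible (⟨ϖ, hϖo⟩ : o))
    (β : E) (hβO : β ∈ O) (hβno : ¬ ∃ x ∈ o, β = algebraMap F E x)
    (a b : F) (hao : a ∈ o) (hbo : b ∈ o) (hau : a⁻¹ ∈ o) (hane : a ≠ 0)
    (hmin : β ^ 2 - algebraMap F E b * β + algebraMap F E a = 0)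
    (ι₀ : E →+* Matrix (Fin 2) (Fin 2) F)
    (hι₀ : ∀ x : E, ∀ j : Fin 2,
      x * (![β, 1] j) = ∑ i : Fin 2, (![β, 1] i) * algebraMap F E (ι₀ x i j))
    (r c : ℕ) (hr : 1 ≤ r) (hc : 1 ≤ c) :
    ({g | ∃ k ∈ K0 o ϖ c, ∃ t ∈ OrEx o ϖ β r,
        g = k * (aM (ϖ ^ r) * ι₀ t * aM ((ϖ ^ r)⁻¹))} :
        Set (Matrix (Fin 2) (Fin 2) F)) =
      {g | g ∈ GLo o ∧ (g 1 1)⁻¹ ∈ o ∧ g 1 1 ≠ 0} ∧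
    (∀ g : Matrix (Fin 2) (Fin 2) F,
      (∃ k ∈ K0 o ϖ c, ∃ t ∈ OrEx o ϖ β r,
        g = k * (aM (ϖ ^ r) * ι₀ t * aM ((ϖ ^ r)⁻¹))) ↔
      ∃ u ∈ o, ∃ k ∈ K0 o ϖ c, g = k * nmM u) ∧
    (∀ u₁ ∈ o, ∀ u₂ ∈ o,
      ((∃ d ∈ o, u₁ - u₂ = ϖ ^ c * d) →
        {g | ∃ k ∈ K0 o ϖ c, g = k * nmM u₁} =
          {g | ∃ k ∈ K0 o ϖ c, g = k * nmM u₂}) ∧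
      (¬ (∃ d ∈ o, u₁ - u₂ = ϖ ^ c * d) →
        Disjoint {g : Matrix (Fin 2) (Fin 2) F | ∃ k ∈ K0 o ϖ c, g = k * nmM u₁}
          {g | ∃ k ∈ K0 o ϖ c, g = k * nmM u₂})) := by
  have hϖ1 : o.valuation ϖ < 1 :=
    (o.valuation_lt_one_iff ⟨ϖ, hϖo⟩).1 ((IsLocalRing.mem_maximalIdeal _).2 hϖ.not_isUnit)
  have hϖ0 : ϖ ≠ 0 := fun h => hϖ.ne_zero (Subtype.ext h)
  have hβ : β ∉ Set.range (algebraMap F E) := by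
    rintro ⟨x, rfl⟩
    exact hβno ⟨x, (hcomp x).2 hβO, rfl⟩
  have ha : o.valuation a = 1 := (inv_mem_and_ne_zero_iff hao).1 ⟨hau, hane⟩
  have hr0 : r ≠ 0 := by omega
  have hc0 : c ≠ 0 := by omega
  have hTU := fun g => exists_K0_mul_nmM_iff (g := g) hϖ1 hc0
  have hSU : ∀ g, (∃ k ∈ K0 o ϖ c, ∃ t ∈ OrEx o ϖ β r,
      g = k * (aM (ϖ ^ r) * ι₀ t * aM ((ϖ ^ r)⁻¹))) → g ∈ GLo o ∧ (g 1 1)⁻¹ ∈ o ∧ g 1 1 ≠ 0 := by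
    rintro _ ⟨k, hk, t, ht, rfl⟩
    exact mul_conj_mem_of_mem_OrEx hβ hmin hao hbo hι₀ hϖ1 hϖ0 hr0 hk.1
      (valuation_K0_one_one hϖ1 hc0 hk) ht
  have hTS : ∀ g, (∃ u ∈ o, ∃ k ∈ K0 o ϖ c, g = k * nmM u) → ∃ k ∈ K0 o ϖ c,
      ∃ t ∈ OrEx o ϖ β r, g = k * (aM (ϖ ^ r) * ι₀ t * aM ((ϖ ^ r)⁻¹)) := by
    rintro _ ⟨u, hu, k, hk, rfl⟩
    exact exists_K0_mul_conj_eq hβ hmin ha hbo hι₀ hϖ1 hϖ0 hr0 hu hk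
  exact ⟨Set.ext fun g => ⟨hSU g, fun hg => hTS g ((hTU g).2 hg)⟩,
    fun g => ⟨fun hg => (hTU g).2 (hSU g hg), hTS g⟩,
    fun _ _ _ _ => ⟨K0_mul_nmM_eq hϖo, disjoint_K0_mul_nmM hϖo⟩⟩

/-- For a quadratic field extension `E/F` and integers `r ≥ 1`,
`c ≥ 1`: `K₀(𝔭^c)·ι_r(𝒪_r^×) = ⨆_{u ∈ 𝔬/𝔭^c} K₀(𝔭^c)·n₋(u)
= {[[c₁,c₂],[c₃,c₄]] ∈ GL₂(𝔬) : c₄ ∈ 𝔬^×}`; in particular this set is independent of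
`c ≥ 1`. -/
theorem stmt_14 {F E : Type*} [Field F] [Field E] [Algebra F E]
    (o : ValuationSubring F) [IsDiscreteValuationRing o]
    (O : ValuationSubring E) [IsDiscreteValuationRing O]
    (hcomp : ∀ x : F, x ∈ o ↔ algebraMap F E x ∈ O)
    (ϖ : F) (hϖo : ϖ ∈ o) (hϖ : Irreducible (⟨ϖ, hϖo⟩ : o))
    (β : E) (hβO : β ∈ O) (hβno : ¬ ∃ x ∈ o, β = algebraMap F E x)
    (hOgen : ∀ z ∈ O, ∃ x y : F, x ∈ o ∧ y ∈ o ∧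
      z = algebraMap F E x + algebraMap F E y * β)
    (hquad : ∀ z : E, ∃ s t : F, z = algebraMap F E s + algebraMap F E t * β)
    (a b : F) (hao : a ∈ o) (hbo : b ∈ o) (hau : a⁻¹ ∈ o) (hane : a ≠ 0)
    (hmin : β ^ 2 - algebraMap F E b * β + algebraMap F E a = 0)
    (ι₀ : E →+* Matrix (Fin 2) (Fin 2) F)
    (hι₀ : ∀ x : E, ∀ j : Fin 2,
      x * (![β, 1] j) = ∑ i : Fin 2, (![β, 1] i) * algebraMap F E (ι₀ x i j))
    (r c : ℕ) (hr : 1 ≤ r) (hc : 1 ≤ c) :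
    ({g | ∃ k ∈ K0 o ϖ c, ∃ t ∈ OrEx o ϖ β r,
        g = k * (aM (ϖ ^ r) * ι₀ t * aM ((ϖ ^ r)⁻¹))} :
        Set (Matrix (Fin 2) (Fin 2) F)) =
      {g | g ∈ GLo o ∧ (g 1 1)⁻¹ ∈ o ∧ g 1 1 ≠ 0} ∧
    (∀ g : Matrix (Fin 2) (Fin 2) F,
      (∃ k ∈ K0 o ϖ c, ∃ t ∈ OrEx o ϖ β r,
        g = k * (aM (ϖ ^ r) * ι₀ t * aM ((ϖ ^ r)⁻¹))) ↔
      ∃ u ∈ o, ∃ k ∈ K0 o ϖ c, g = k * nmM u) ∧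
    (∀ u₁ ∈ o, ∀ u₂ ∈ o,
      ((∃ d ∈ o, u₁ - u₂ = ϖ ^ c * d) →
        {g | ∃ k ∈ K0 o ϖ c, g = k * nmM u₁} =
          {g | ∃ k ∈ K0 o ϖ c, g = k * nmM u₂}) ∧
      (¬ (∃ d ∈ o, u₁ - u₂ = ϖ ^ c * d) →
        Disjoint {g : Matrix (Fin 2) (Fin 2) F | ∃ k ∈ K0 o ϖ c, g = k * nmM u₁}
          {g | ∃ k ∈ K0 o ϖ c, g = k * nmM u₂})) :=
  stmt_14_general o O hcomp ϖ hϖo hϖ β hβO hβno a b hao hbo hau hane hmin ι₀ hι₀ r c hr hc
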